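/- arXiv:2111.12070 — 2 statements merged into one kernel-verified Lean document; each statement's English description precedes it below -/
import Mathlib

section
/- Let S = ⟨a_1,…,a_n⟩ ⊆ ℕ^d be an affine semigroup with PF(S) ≠ ∅ and let k be a field. Suppose the toric ideal I_S admits a system of binomial generators φ_1,…,φ_m such that for each k-th generator there exist indices i < j and f ∈ PF(S) with S-degree of φ_k equal to f + a_i + a_j, and φ_k = u − v where u and v are monomials with x_i dividing u and x_j dividing v. Then I_S is generated by RF-relations. -/
open Finset BigOperators

/-! Basic notions for affine semigroups in `ℕ^d`, following
"Affine semigroups of maximal projective dimension". -/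

def natToQ {d : ℕ} (x : Fin d → ℕ) : Fin d → ℚ := fun i => (x i : ℚ)

def natToZ {d : ℕ} (x : Fin d → ℕ) : Fin d → ℤ := fun i => (x i : ℤ)

/-- The rational cone spanned by an affine semigroup `S ⊆ ℕ^d`: the set of
nonnegative rational combinations of elements of `S` (equivalently, of any
generating set of `S`). -/
def cone {d : ℕ} (S : AddSubmonoid (Fin d → ℕ)) : Set (Fin d → ℚ) :=
  { q | ∃ (m : ℕ) (lam : Fin m → ℚ) (s : Fin m → Fin d → ℕ),
      (∀ i, 0 ≤ lam i) ∧ (∀ i, s i ∈ S) ∧ q = ∑ i, lam i • natToQ (s i) }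

/-- `H(S) = (cone(S) \ S) ∩ ℕ^d`. -/
def HSet {d : ℕ} (S : AddSubmonoid (Fin d → ℕ)) : Set (Fin d → ℕ) :=
  { x | natToQ x ∈ cone S ∧ x ∉ S }

/-- The set of pseudo-Frobenius elements of `S`. -/
def PF {d : ℕ} (S : AddSubmonoid (Fin d → ℕ)) : Set (Fin d → ℕ) :=
  { f | f ∈ HSet S ∧ ∀ s ∈ S, s ≠ 0 → f + s ∈ S }

/-- `A` is a minimal generating set of `S`. -/
def IsMinGenSet {d : ℕ} (A : Set (Fin d → ℕ)) (S : AddSubmonoid (Fin d → ℕ)) : Prop :=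
  AddSubmonoid.closure A = S ∧ ∀ x ∈ A, x ∉ AddSubmonoid.closure (A \ {x})

/-- The family `a : Fin n → ℕ^d` is a minimal generating family (the minimal
generating set) of `S`. -/
def MinGen {n d : ℕ} (a : Fin n → Fin d → ℕ) (S : AddSubmonoid (Fin d → ℕ)) : Prop :=
  Function.Injective a ∧ IsMinGenSet (Set.range a) S

/-- `G(S)`: the subgroup of `ℤ^d` generated by `S`. -/
def grpOf {d : ℕ} (S : AddSubmonoid (Fin d → ℕ)) : AddSubgroup (Fin d → ℤ) :=
  AddSubgroup.closure (natToZ '' (S : Set (Fin d → ℕ)))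

/-- `S = S₁ +_c S₂` is a gluing of the affine semigroups `S₁` and `S₂`. -/
structure IsGluing {d : ℕ} (S S₁ S₂ : AddSubmonoid (Fin d → ℕ)) (c : Fin d → ℕ) : Prop where
  exists_partition : ∃ A₁ A₂ : Set (Fin d → ℕ),
    A₁.Finite ∧ A₂.Finite ∧ A₁.Nonempty ∧ A₂.Nonempty ∧ Disjoint A₁ A₂ ∧
    IsMinGenSet (A₁ ∪ A₂) S ∧ S₁ = AddSubmonoid.closure A₁ ∧ S₂ = AddSubmonoid.closure A₂
  mem₁ : c ∈ S₁
  mem₂ : c ∈ S₂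
  grp : grpOf S₁ ⊓ grpOf S₂ = AddSubgroup.zmultiples (natToZ c)

/-- A term order on `ℕ^d`: a total order compatible with addition for which `0`
is the least element. -/
structure TermOrder (d : ℕ) : Type where
  lt : (Fin d → ℕ) → (Fin d → ℕ) → Prop
  irrefl : ∀ x, ¬ lt x x
  trans : ∀ {x y z}, lt x y → lt y z → lt x z
  total : ∀ x y, x = y ∨ lt x y ∨ lt y x
  zero_lt : ∀ x, x ≠ 0 → lt 0 x
  add_compat : ∀ {x y : Fin d → ℕ} (z : Fin d → ℕ), lt x y → lt (x + z) (y + z)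

/-- `F` is the Frobenius element `F(S)_≺ = max_≺ H(S)`. -/
def IsFrob {d : ℕ} (τ : TermOrder d) (S : AddSubmonoid (Fin d → ℕ)) (F : Fin d → ℕ) : Prop :=
  F ∈ HSet S ∧ ∀ x ∈ HSet S, x ≠ F → τ.lt x F

/-- `S` is `≺`-almost symmetric. -/
def AlmostSym {d : ℕ} (τ : TermOrder d) (S : AddSubmonoid (Fin d → ℕ)) : Prop :=
  ∃ F, IsFrob τ S F ∧ ((PF S) \ {F}).Nonempty ∧
    ∀ g ∈ (PF S) \ {F}, ∃ h ∈ (PF S) \ {F}, g + h = F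

/-- A row-factorization matrix of `f` relative to the generators `a`. -/
def IsRFMatrix {n d : ℕ} (a : Fin n → Fin d → ℕ) (f : Fin d → ℕ)
    (M : Matrix (Fin n) (Fin n) ℤ) : Prop :=
  (∀ i, M i i = -1) ∧ (∀ i j, i ≠ j → 0 ≤ M i j) ∧
  (∀ i, ∑ j, M i j • natToZ (a j) = natToZ f)

/-- The monomial `x^u` in `k[x_1,…,x_n]`. -/
noncomputable def mono (k : Type*) [CommRing k] {n : ℕ} (u : Fin n → ℕ) :
    MvPolynomial (Fin n) k :=
  MvPolynomial.monomial (Finsupp.equivFunOnFinite.symm u) 1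

/-- The binomial `x^u - x^v`. -/
noncomputable def binom (k : Type*) [CommRing k] {n : ℕ} (u v : Fin n → ℕ) :
    MvPolynomial (Fin n) k :=
  mono k u - mono k v

/-- The semigroup map `π : k[x_1,…,x_n] → k[t_1,…,t_d]`, `x_i ↦ t^{a_i}`. -/
noncomputable def toricMap (k : Type*) [CommRing k] {n d : ℕ} (a : Fin n → Fin d → ℕ) :
    MvPolynomial (Fin n) k →ₐ[k] MvPolynomial (Fin d) k :=
  MvPolynomial.aeval (fun i => mono k (a i))

/-- The toric ideal `I_S = ker π`. -/
noncomputable def toricIdeal (k : Type*) [CommRing k] {n d : ℕ} (a : Fin n → Fin d → ℕ) :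
    Ideal (MvPolynomial (Fin n) k) :=
  RingHom.ker (toricMap k a).toRingHom

/-- Positive part of an integer vector. -/
def pospart {n : ℕ} (v : Fin n → ℤ) : Fin n → ℕ := fun i => (v i).toNat

/-- Negative part of an integer vector. -/
def negpart {n : ℕ} (v : Fin n → ℤ) : Fin n → ℕ := fun i => (-(v i)).toNat

/-- `p` is an RF-relation: a binomial obtained from the difference of two rows of
some RF-matrix of some pseudo-Frobenius element. -/
def IsRFRelation (k : Type*) [CommRing k] {n d : ℕ} (a : Fin n → Fin d → ℕ)
    (S : AddSubmonoid (Fin d → ℕ)) (p : MvPolynomial (Fin n) k) : Prop :=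
  ∃ f ∈ PF S, ∃ M : Matrix (Fin n) (Fin n) ℤ, IsRFMatrix a f M ∧
    ∃ i j : Fin n, i < j ∧
      p = binom k (pospart fun l => M i l - M j l) (negpart fun l => M i l - M j l)

/-- The toric ideal `I_S` is generic: it is minimally generated by binomials of
full support. -/
def IsGeneric (k : Type*) [CommRing k] {n d : ℕ} (a : Fin n → Fin d → ℕ) : Prop :=
  ∃ G : Finset (MvPolynomial (Fin n) k),
    (∀ g ∈ G, ∃ u v : Fin n → ℕ, g = binom k u v ∧ ∀ l, u l ≠ 0 ∨ v l ≠ 0) ∧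
    Ideal.span (G : Set (MvPolynomial (Fin n) k)) = toricIdeal k a ∧
    ∀ G' : Finset (MvPolynomial (Fin n) k), G' ⊂ G →
      Ideal.span (G' : Set (MvPolynomial (Fin n) k)) ≠ toricIdeal k a

/-- The Apéry set `Ap(S, x) = { y ∈ S : y - x ∈ H(S) }`. -/
def Ap {d : ℕ} (S : AddSubmonoid (Fin d → ℕ)) (x : Fin d → ℕ) : Set (Fin d → ℕ) :=
  { y | y ∈ S ∧ ∃ z ∈ HSet S, y = x + z }

/-- `UF(S)`: elements with a unique factorization in terms of the generators `a`. -/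
def UF {n d : ℕ} (a : Fin n → Fin d → ℕ) : Set (Fin d → ℕ) :=
  { x | ∃! u : Fin n → ℕ, x = ∑ l, u l • a l }

open Classical in
/-- The multivariate Hilbert series `Σ_{a ∈ S} t^a` of `S`. -/
noncomputable def hilbSeries {d : ℕ} (S : AddSubmonoid (Fin d → ℕ)) :
    MvPowerSeries (Fin d) ℤ :=
  fun e => if Finsupp.equivFunOnFinite e ∈ S then 1 else 0

section helpers

lemma RF_symm_add {d : ℕ} (x y : Fin d → ℕ) :
    (Finsupp.equivFunOnFinite.symm (x + y) : Fin d →₀ ℕ)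
      = Finsupp.equivFunOnFinite.symm x + Finsupp.equivFunOnFinite.symm y := by
  ext i; simp

lemma RF_mono_mul (k : Type*) [CommRing k] {n : ℕ} (x y : Fin n → ℕ) :
    mono k x * mono k y = mono k (x + y) := by
  unfold mono
  rw [MvPolynomial.monomial_mul, one_mul, RF_symm_add]

lemma RF_prod_monomial (k : Type*) [CommRing k] {n d : ℕ} (s : Fin n → (Fin d →₀ ℕ))
    (t : Finset (Fin n)) :
    ∏ l ∈ t, (MvPolynomial.monomial (s l) (1:k)) = MvPolynomial.monomial (∑ l ∈ t, s l) 1 := by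
  classical
  induction t using Finset.induction with
  | empty => simp
  | insert _ _ h ih =>
      rw [Finset.prod_insert h, Finset.sum_insert h, ih, MvPolynomial.monomial_mul, one_mul]

lemma RF_symm_sum_smul {n d : ℕ} (u : Fin n → ℕ) (a : Fin n → Fin d → ℕ) :
    (Finsupp.equivFunOnFinite.symm (∑ l, u l • a l) : Fin d →₀ ℕ)
      = ∑ l, u l • Finsupp.equivFunOnFinite.symm (a l) := by
  ext i
  simp [Finsupp.finset_sum_apply, Finset.sum_apply]

lemma RF_toricMap_mono (k : Type*) [CommRing k] {n d : ℕ} (a : Fin n → Fin d → ℕ)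
    (u : Fin n → ℕ) :
    toricMap k a (mono k u) = mono k (∑ l, u l • a l) := by
  unfold toricMap mono
  rw [MvPolynomial.aeval_monomial, map_one, one_mul,
    Finsupp.prod_fintype _ _ (fun l => pow_zero _)]
  have : ∀ l : Fin n,
      (MvPolynomial.monomial (Finsupp.equivFunOnFinite.symm (a l)) (1:k)) ^
        ((Finsupp.equivFunOnFinite.symm u : Fin n →₀ ℕ) l)
      = MvPolynomial.monomial (u l • Finsupp.equivFunOnFinite.symm (a l)) 1 := by
    intro l
    rw [MvPolynomial.monomial_pow, one_pow]
    rfl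
  rw [Finset.prod_congr rfl (fun l _ => this l), RF_prod_monomial, RF_symm_sum_smul]

lemma RF_binom_mem (k : Type*) [CommRing k] {n d : ℕ} (a : Fin n → Fin d → ℕ)
    (u v : Fin n → ℕ) (h : ∑ l, u l • a l = ∑ l, v l • a l) :
    binom k u v ∈ toricIdeal k a := by
  have : toricMap k a (binom k u v) = 0 := by
    unfold binom
    rw [map_sub, RF_toricMap_mono, RF_toricMap_mono, h, sub_self]
  exact this

lemma RF_natToZ_add {d : ℕ} (x y : Fin d → ℕ) : natToZ (x + y) = natToZ x + natToZ y := by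
  funext i; simp [natToZ]

lemma RF_natToZ_inj {d : ℕ} : Function.Injective (natToZ (d := d)) := by
  intro x y h
  funext i
  exact Nat.cast_injective (congrFun h i)

lemma RF_natToZ_sum_smul {n d : ℕ} (c : Fin n → ℕ) (a : Fin n → Fin d → ℕ) :
    natToZ (∑ l, c l • a l) = ∑ l, (c l : ℤ) • natToZ (a l) := by
  funext i
  simp [natToZ, Finset.sum_apply]

lemma RF_mem_closure_iff {n d : ℕ} (a : Fin n → Fin d → ℕ) (x : Fin d → ℕ) :
    x ∈ AddSubmonoid.closure (Set.range a) ↔ ∃ c : Fin n → ℕ, x = ∑ l, c l • a l := by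
  constructor
  · intro hx
    let T : AddSubmonoid (Fin d → ℕ) :=
      { carrier := { y | ∃ c : Fin n → ℕ, y = ∑ l, c l • a l }
        zero_mem' := ⟨0, by simp⟩
        add_mem' := by
          rintro y z ⟨c, rfl⟩ ⟨c', rfl⟩
          exact ⟨c + c', by rw [← Finset.sum_add_distrib]; simp [add_smul]⟩ }
    have hle : AddSubmonoid.closure (Set.range a) ≤ T := by
      rw [AddSubmonoid.closure_le]
      rintro _ ⟨l, rfl⟩
      exact ⟨fun l' => if l' = l then 1 else 0, by simp [ite_smul]⟩
    exact hle hx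
  · rintro ⟨c, rfl⟩
    exact AddSubmonoid.sum_mem _ (fun l _ => AddSubmonoid.nsmul_mem _
      (AddSubmonoid.subset_closure (Set.mem_range_self l)) _)

lemma RF_sum_split {n d : ℕ} (a : Fin n → Fin d → ℕ) (c : Fin n → ℕ) (i : Fin n)
    (hci : c i ≠ 0) :
    ∑ l, c l • a l = a i + ∑ l, (fun l' => if l' = i then c i - 1 else c l') l • a l := by
  classical
  rw [← Finset.add_sum_erase _ _ (Finset.mem_univ i),
    ← Finset.add_sum_erase _ (fun l => (fun l' => if l' = i then c i - 1 else c l') l • a l)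
      (Finset.mem_univ i)]
  simp only [if_pos rfl]
  rw [← add_assoc]
  congr 1
  · have h1 : c i = (c i - 1) + 1 := by omega
    nth_rewrite 1 [h1]
    rw [add_smul, one_smul, add_comm]
    simp
  · exact Finset.sum_congr rfl (fun l hl => by
      rw [if_neg (Finset.ne_of_mem_erase hl)])

lemma RF_fact_coeff_zero {n d : ℕ} {S : AddSubmonoid (Fin d → ℕ)} {a : Fin n → Fin d → ℕ}
    (hS : AddSubmonoid.closure (Set.range a) = S) {f : Fin d → ℕ} (hf : f ∈ PF S)
    (i : Fin n) (c : Fin n → ℕ) (hc : f + a i = ∑ l, c l • a l) : c i = 0 := by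
  by_contra hci
  have hsplit := RF_sum_split a c i hci
  rw [hsplit, add_comm f (a i)] at hc
  have hf' : f = ∑ l, (fun l' => if l' = i then c i - 1 else c l') l • a l :=
    add_left_cancel hc
  have : f ∈ S := by
    rw [← hS, RF_mem_closure_iff]
    exact ⟨_, hf'⟩
  exact hf.1.2 this

lemma RF_sum_sub_delta {n d : ℕ} (a : Fin n → Fin d → ℕ) (g : Fin n → ℤ) (p : Fin n) :
    ∑ l, (g l - (if l = p then 1 else 0)) • natToZ (a l)
      = (∑ l, g l • natToZ (a l)) - natToZ (a p) := by
  rw [Finset.sum_congr rfl (fun l _ => sub_smul (g l) _ _), Finset.sum_sub_distrib]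
  congr 1
  simp [ite_smul]

end helpers

/-- A sufficient condition for the toric ideal `I_S` to be generated
by RF-relations. -/
theorem toricIdeal_generated_by_RF_relations (k : Type*) [Field k] {n d m : ℕ}
    (S : AddSubmonoid (Fin d → ℕ)) (a : Fin n → Fin d → ℕ) (hmin : MinGen a S)
    (hPF : (PF S).Nonempty)
    (φ : Fin m → MvPolynomial (Fin n) k)
    (hgen : Ideal.span (Set.range φ) = toricIdeal k a)
    (hprop : ∀ p : Fin m, ∃ i j : Fin n, i < j ∧ ∃ f ∈ PF S, ∃ u v : Fin n → ℕ,
      φ p = binom k u v ∧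
      (∑ l, u l • a l = f + a i + a j) ∧ (∑ l, v l • a l = f + a i + a j) ∧
      u i ≠ 0 ∧ v j ≠ 0) :
    toricIdeal k a = Ideal.span { p : MvPolynomial (Fin n) k | IsRFRelation k a S p } := by
  classical
  have hS : AddSubmonoid.closure (Set.range a) = S := hmin.2.1
  apply le_antisymm
  · -- I_S ⊆ span of RF-relations
    rw [← hgen, Ideal.span_le]
    rintro _ ⟨p, rfl⟩
    obtain ⟨i, j, hij, f, hf, u, v, hφ, hu, hv, hui, hvj⟩ := hprop p
    have hne : i ≠ j := ne_of_lt hij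
    -- u j = 0
    have huj : u j = 0 := by
      have hsplit := RF_sum_split a u i hui
      rw [hu] at hsplit
      have hfc : f + a j = ∑ l, (fun l' => if l' = i then u i - 1 else u l') l • a l := by
        apply add_left_cancel (a := a i)
        rw [← hsplit]; abel
      have := RF_fact_coeff_zero hS hf j _ hfc
      simpa [if_neg (Ne.symm hne)] using this
    -- v i = 0
    have hvi : v i = 0 := by
      have hsplit := RF_sum_split a v j hvj
      rw [hv] at hsplit
      have hfc : f + a i = ∑ l, (fun l' => if l' = j then v j - 1 else v l') l • a l := by
        apply add_left_cancel (a := a j)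
        rw [← hsplit]; abel
      have := RF_fact_coeff_zero hS hf i _ hfc
      simpa [if_neg hne] using this
    -- factorization rows for every index
    have hrow : ∀ r : Fin n, ∃ c : Fin n → ℕ, (f + a r = ∑ l, c l • a l) ∧ c r = 0 := by
      intro r
      have har : a r ∈ S := hS ▸ AddSubmonoid.subset_closure (Set.mem_range_self r)
      have har0 : a r ≠ 0 := by
        intro h0
        apply hmin.2.2 (a r) (Set.mem_range_self r)
        rw [h0]
        exact zero_mem _
      have hfar : f + a r ∈ S := hf.2 _ har har0
      rw [← hS, RF_mem_closure_iff] at hfar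
      obtain ⟨c, hc⟩ := hfar
      exact ⟨c, hc, RF_fact_coeff_zero hS hf r c hc⟩
    choose crow hcrow hcrow0 using hrow
    -- the RF-matrix
    set M : Matrix (Fin n) (Fin n) ℤ := fun r l =>
      if r = i then (v l : ℤ) - (if l = i then 1 else 0) - (if l = j then 1 else 0)
      else if r = j then (u l : ℤ) - (if l = i then 1 else 0) - (if l = j then 1 else 0)
      else (crow r l : ℤ) - (if l = r then 1 else 0) with hMdef
    have hMval : ∀ r l, M r l =
        if r = i then (v l : ℤ) - (if l = i then 1 else 0) - (if l = j then 1 else 0)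
        else if r = j then (u l : ℤ) - (if l = i then 1 else 0) - (if l = j then 1 else 0)
        else (crow r l : ℤ) - (if l = r then 1 else 0) := by
      intro r l; rw [hMdef]
    have hM : IsRFMatrix a f M := by
      refine ⟨?_, ?_, ?_⟩
      · intro r
        rw [hMval]
        by_cases hri : r = i
        · rw [if_pos hri, hri, if_pos rfl, if_neg hne]
          have : v i = 0 := hvi
          omega
        · by_cases hrj : r = j
          · rw [if_neg hri, if_pos hrj, hrj, if_neg (Ne.symm hne), if_pos rfl]
            have : u j = 0 := huj
            omega
          · rw [if_neg hri, if_neg hrj, if_pos rfl]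
            have : crow r r = 0 := hcrow0 r
            omega
      · intro r l hrl
        rw [hMval]
        have h1 : u i ≠ 0 := hui
        have h2 : v j ≠ 0 := hvj
        split_ifs <;> (try subst_vars) <;>
          first
            | (exact absurd rfl hrl)
            | omega
      · intro r
        by_cases hri : r = i
        · have hstep : ∑ l, M r l • natToZ (a l) =
              ∑ l, ((v l : ℤ) - (if l = i then 1 else 0) - (if l = j then 1 else 0))
                • natToZ (a l) :=
            Finset.sum_congr rfl (fun l _ => by rw [hMval, if_pos hri])
          rw [hstep,
            RF_sum_sub_delta a (fun l => (v l : ℤ) - (if l = i then 1 else 0)) j,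
            RF_sum_sub_delta a (fun l => (v l : ℤ)) i, ← RF_natToZ_sum_smul, hv,
            RF_natToZ_add, RF_natToZ_add]
          abel
        · by_cases hrj : r = j
          · have hstep : ∑ l, M r l • natToZ (a l) =
                ∑ l, ((u l : ℤ) - (if l = i then 1 else 0) - (if l = j then 1 else 0))
                  • natToZ (a l) :=
              Finset.sum_congr rfl (fun l _ => by rw [hMval, if_neg hri, if_pos hrj])
            rw [hstep,
              RF_sum_sub_delta a (fun l => (u l : ℤ) - (if l = i then 1 else 0)) j,
              RF_sum_sub_delta a (fun l => (u l : ℤ)) i, ← RF_natToZ_sum_smul, hu,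
              RF_natToZ_add, RF_natToZ_add]
            abel
          · have hstep : ∑ l, M r l • natToZ (a l) =
                ∑ l, ((crow r l : ℤ) - (if l = r then 1 else 0)) • natToZ (a l) :=
              Finset.sum_congr rfl (fun l _ => by rw [hMval, if_neg hri, if_neg hrj])
            rw [hstep, RF_sum_sub_delta a (fun l => (crow r l : ℤ)) r, ← RF_natToZ_sum_smul,
              ← hcrow r, RF_natToZ_add]
            abel
    -- the difference of rows i and j
    have hw : (fun l => M i l - M j l) = fun l => (v l : ℤ) - (u l : ℤ) := by
      funext l
      rw [hMval, hMval, if_pos rfl, if_neg (Ne.symm hne), if_pos rfl]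
      ring
    have hq : IsRFRelation k a S
        (binom k (pospart fun l => (v l : ℤ) - (u l : ℤ))
          (negpart fun l => (v l : ℤ) - (u l : ℤ))) :=
      ⟨f, hf, M, hM, i, j, hij, by rw [hw]⟩
    -- φ p is a monomial multiple of this RF-relation
    set g : Fin n → ℕ := fun l => min (u l) (v l) with hgdef
    have hgu : g + negpart (fun l => (v l : ℤ) - (u l : ℤ)) = u := by
      funext l; simp only [hgdef, negpart, Pi.add_apply]; omega
    have hgv : g + pospart (fun l => (v l : ℤ) - (u l : ℤ)) = v := by
      funext l; simp only [hgdef, pospart, Pi.add_apply]; omega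
    have hfactor : φ p = -(mono k g *
        binom k (pospart fun l => (v l : ℤ) - (u l : ℤ))
          (negpart fun l => (v l : ℤ) - (u l : ℤ))) := by
      rw [hφ]
      unfold binom
      rw [mul_sub, RF_mono_mul, RF_mono_mul, hgu, hgv]
      ring
    rw [hfactor]
    exact neg_mem (Ideal.mul_mem_left _ _ (Ideal.subset_span hq))
  · -- span of RF-relations ⊆ I_S
    rw [Ideal.span_le]
    rintro _ ⟨f, hf, M, hM, i, j, hij, rfl⟩
    apply RF_binom_mem
    apply RF_natToZ_inj
    rw [RF_natToZ_sum_smul, RF_natToZ_sum_smul]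
    have h0 : ∑ l, (M i l - M j l) • natToZ (a l) = 0 := by
      rw [Finset.sum_congr rfl (fun l _ => sub_smul (M i l) (M j l) _),
        Finset.sum_sub_distrib, hM.2.2 i, hM.2.2 j, sub_self]
    have key : ∀ l, ((pospart (fun l => M i l - M j l) l : ℤ)) • natToZ (a l)
        = ((negpart (fun l => M i l - M j l) l : ℤ)) • natToZ (a l)
          + (M i l - M j l) • natToZ (a l) := by
      intro l
      rw [← add_smul]
      congr 1
      simp only [pospart, negpart]
      omega
    rw [Finset.sum_congr rfl (fun l _ => key l), Finset.sum_add_distrib, h0, add_zero]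
end

section
/- Let S = ⟨a_1,…,a_n⟩ ⊆ ℕ^d be an affine semigroup, k a field, and suppose the toric ideal I_S ⊆ k[x_1,…,x_n] is generic. Then for every f ∈ PF(S) there is a unique row-factorization matrix M = (m_{ij}) of f, and moreover no column of M contains two equal entries: m_{ij} ≠ m_{i'j} for all i ≠ i' and all j. -/
open Finset BigOperators

section Aux
variable (k : Type*) [CommRing k] {n d : ℕ}

theorem mono_add (x y : Fin n → ℕ) : mono k (x + y) = mono k x * mono k y := by
  have h : Finsupp.equivFunOnFinite.symm (x + y)
      = Finsupp.equivFunOnFinite.symm x + Finsupp.equivFunOnFinite.symm y := by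
    ext i; simp
  simp [mono, MvPolynomial.monomial_mul, h]

theorem mono_zero : mono k (0 : Fin n → ℕ) = 1 := by
  have h : Finsupp.equivFunOnFinite.symm (0 : Fin n → ℕ) = 0 := by ext i; simp
  simp [mono, h]

theorem mono_pow (x : Fin n → ℕ) (e : ℕ) : mono k x ^ e = mono k (e • x) := by
  induction e with
  | zero => simp [mono_zero]
  | succ m ih => rw [pow_succ, ih, ← mono_add, succ_nsmul]

theorem mono_sum {α : Type*} (s : Finset α) (g : α → Fin n → ℕ) :
    ∏ i ∈ s, mono k (g i) = mono k (∑ i ∈ s, g i) := by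
  classical
  induction s using Finset.induction_on with
  | empty => simp [mono_zero]
  | insert a s h ih => simp [Finset.prod_insert h, Finset.sum_insert h, ih, mono_add]

theorem toricMap_mono (a : Fin n → Fin d → ℕ) (u : Fin n → ℕ) :
    toricMap k a (mono k u) = mono k (∑ l, u l • a l) := by
  classical
  rw [toricMap, mono, MvPolynomial.aeval_monomial, map_one, one_mul]
  rw [Finsupp.prod_fintype _ _ (fun i => pow_zero _)]
  simp only [Finsupp.coe_equivFunOnFinite_symm]
  calc (∏ i, mono k (a i) ^ u i) = ∏ i, mono k (u i • a i) := by
        simp [mono_pow]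
    _ = mono k (∑ i, u i • a i) := mono_sum k _ _

end Aux
section Aux2
variable {k : Type*} [Field k] {n d : ℕ}

theorem mono_inj {x y : Fin n → ℕ} (h : mono k x = mono k y) : x = y := by
  have := MvPolynomial.monomial_left_injective (R := k) (one_ne_zero) h
  exact Finsupp.equivFunOnFinite.symm.injective this

theorem binom_mem_of_sum_eq (a : Fin n → Fin d → ℕ) {u v : Fin n → ℕ}
    (h : ∑ l, u l • a l = ∑ l, v l • a l) : binom k u v ∈ toricIdeal k a := by
  rw [toricIdeal, RingHom.mem_ker]
  show toricMap k a (binom k u v) = 0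
  rw [binom, map_sub, toricMap_mono, toricMap_mono, h, sub_self]

theorem sum_eq_of_binom_mem {a : Fin n → Fin d → ℕ} {u v : Fin n → ℕ}
    (h : binom k u v ∈ toricIdeal k a) : ∑ l, u l • a l = ∑ l, v l • a l := by
  rw [toricIdeal, RingHom.mem_ker] at h
  replace h : toricMap k a (binom k u v) = 0 := h
  rw [binom, map_sub, toricMap_mono, toricMap_mono, sub_eq_zero] at h
  exact mono_inj h

theorem coeff_binom_self {u v : Fin n → ℕ} (hne : u ≠ v) :
    MvPolynomial.coeff (Finsupp.equivFunOnFinite.symm u) (binom k u v) = 1 := by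
  have h2 : Finsupp.equivFunOnFinite.symm u ≠ Finsupp.equivFunOnFinite.symm v :=
    fun h => hne (Finsupp.equivFunOnFinite.symm.injective h)
  simp [binom, mono, MvPolynomial.coeff_monomial, h2.symm]

/-- Key consequence of genericity: if a binomial `x^u - x^v` with `u ≠ v` lies in the
toric ideal, then some full-support relation `(p, q)` has `p ≤ u`. -/
theorem genA {a : Fin n → Fin d → ℕ} (hgen : IsGeneric k a) {u v : Fin n → ℕ}
    (hne : u ≠ v) (hsum : ∑ l, u l • a l = ∑ l, v l • a l) :
    ∃ p q : Fin n → ℕ, (∑ l, p l • a l = ∑ l, q l • a l) ∧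
      (∀ l, p l ≠ 0 ∨ q l ≠ 0) ∧ p ≤ u := by
  classical
  obtain ⟨G, hG1, hG2, -⟩ := hgen
  have hmem : binom k u v ∈ Ideal.span (G : Set (MvPolynomial (Fin n) k)) := by
    rw [hG2]; exact binom_mem_of_sum_eq a hsum
  rw [Ideal.span, Submodule.mem_span_finset] at hmem
  obtain ⟨h, -, hh⟩ := hmem
  set U := Finsupp.equivFunOnFinite.symm u with hU
  have hcoeff : ∑ g ∈ G, MvPolynomial.coeff U (h g * g) = 1 := by
    have : MvPolynomial.coeff U (∑ g ∈ G, h g * g) = 1 := by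
      simp only [smul_eq_mul] at hh
      rw [hh]; exact coeff_binom_self hne
    rw [← this, MvPolynomial.coeff_sum]
  have hex : ∃ g ∈ G, MvPolynomial.coeff U (h g * g) ≠ 0 := by
    by_contra hc
    push_neg at hc
    rw [Finset.sum_eq_zero hc] at hcoeff
    exact one_ne_zero hcoeff.symm
  obtain ⟨g, hgG, hg0⟩ := hex
  obtain ⟨p₀, q₀, hgeq, hfull⟩ := hG1 g hgG
  have hgI : g ∈ toricIdeal k a := by
    rw [← hG2]; exact Ideal.subset_span hgG
  have hsums : ∑ l, p₀ l • a l = ∑ l, q₀ l • a l := by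
    by_cases hpq : p₀ = q₀
    · rw [hpq]
    · exact sum_eq_of_binom_mem (hgeq ▸ hgI)
  rw [hgeq] at hg0
  set c := h (binom k p₀ q₀) with hcdef
  rw [binom, mono, mono, sub_eq_add_neg, mul_add, MvPolynomial.coeff_add,
    mul_neg, MvPolynomial.coeff_neg] at hg0
  have key : ∀ w : Fin n → ℕ, MvPolynomial.coeff U (c * (MvPolynomial.monomial
      (Finsupp.equivFunOnFinite.symm w)) 1) ≠ 0 → w ≤ u := by
    intro w hw
    rw [MvPolynomial.coeff_mul_monomial'] at hw
    by_cases hle : Finsupp.equivFunOnFinite.symm w ≤ U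
    · intro l
      have := hle l
      simpa [hU] using this
    · simp [hle] at hw
  have hdiv : p₀ ≤ u ∨ q₀ ≤ u := by
    by_cases h1 : MvPolynomial.coeff U (c * (MvPolynomial.monomial
        (Finsupp.equivFunOnFinite.symm p₀)) 1) ≠ 0
    · exact Or.inl (key _ h1)
    · push_neg at h1
      rw [h1] at hg0
      refine Or.inr (key _ ?_)
      intro h2
      rw [h2] at hg0
      simp at hg0
  rcases hdiv with h1 | h1
  · exact ⟨p₀, q₀, hsums, hfull, h1⟩
  · exact ⟨q₀, p₀, hsums.symm, fun l => (hfull l).symm, h1⟩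

end Aux2
section Aux3
variable {n d : ℕ}

theorem mem_S_iff {a : Fin n → Fin d → ℕ} {S : AddSubmonoid (Fin d → ℕ)}
    (hS : AddSubmonoid.closure (Set.range a) = S) (x : Fin d → ℕ) :
    x ∈ S ↔ ∃ u : Fin n → ℕ, x = ∑ l, u l • a l := by
  constructor
  · intro hx
    rw [← hS] at hx
    induction hx using AddSubmonoid.closure_induction with
    | mem y hy =>
      obtain ⟨i, rfl⟩ := hy
      refine ⟨Pi.single i 1, ?_⟩
      simp [Pi.single_apply, ite_smul]
    | zero => exact ⟨0, by simp⟩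
    | add y z _ _ hy hz =>
      obtain ⟨u1, rfl⟩ := hy
      obtain ⟨u2, rfl⟩ := hz
      exact ⟨u1 + u2, by simp [add_smul, Finset.sum_add_distrib]⟩
  · rintro ⟨u, rfl⟩
    rw [← hS]
    exact sum_mem (fun l _ =>
      AddSubmonoid.nsmul_mem _ (AddSubmonoid.subset_closure (Set.mem_range_self l)) _)

/-- Adding `1` at coordinate `i` to a factorization adds `a i`. -/
theorem sum_add_single (a : Fin n → Fin d → ℕ) (c : Fin n → ℕ) (i : Fin n) :
    ∑ l, (c l + if l = i then 1 else 0) • a l = (∑ l, c l • a l) + a i := by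
  classical
  rw [Finset.sum_congr rfl (fun l _ => add_smul (c l) _ (a l)), Finset.sum_add_distrib]
  congr 1
  simp [ite_smul, Finset.sum_ite_eq']

/-- If `c i ≠ 0` and `∑ c a = f + a i`, then `f` factors. -/
theorem coord_zero {a : Fin n → Fin d → ℕ} {S : AddSubmonoid (Fin d → ℕ)}
    (hS : AddSubmonoid.closure (Set.range a) = S) {f : Fin d → ℕ} (hfS : f ∉ S)
    (i : Fin n) (c : Fin n → ℕ) (hc : ∑ l, c l • a l = f + a i) : c i = 0 := by
  classical
  by_contra h0
  set c' : Fin n → ℕ := fun l => if l = i then c l - 1 else c l with hc'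
  have hcc : ∀ l, c l = c' l + if l = i then 1 else 0 := by
    intro l
    by_cases hl : l = i
    · subst hl; simp [hc', Nat.sub_add_cancel (Nat.one_le_iff_ne_zero.mpr h0)]
    · simp [hc', hl]
  have : ∑ l, c l • a l = (∑ l, c' l • a l) + a i := by
    rw [Finset.sum_congr rfl (fun l _ => by rw [hcc l])]
    exact sum_add_single a c' i
  rw [this] at hc
  have hf : f = ∑ l, c' l • a l := (add_right_cancel hc).symm
  exact hfS ((mem_S_iff hS f).mpr ⟨c', hf⟩)

/-- Exchanging a sub-factorization `p` for `q` with the same value. -/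
theorem sum_replace (a : Fin n → Fin d → ℕ) {p q c : Fin n → ℕ}
    (hpq : ∑ l, p l • a l = ∑ l, q l • a l) (hpc : p ≤ c) :
    ∑ l, (c l - p l + q l) • a l = ∑ l, c l • a l := by
  have key : (∑ l, (c l - p l + q l) • a l) + ∑ l, p l • a l
      = (∑ l, c l • a l) + ∑ l, q l • a l := by
    rw [← Finset.sum_add_distrib, ← Finset.sum_add_distrib]
    refine Finset.sum_congr rfl (fun l _ => ?_)
    rw [← add_smul, ← add_smul]
    have h2 : p l ≤ c l := hpc l
    congr 1
    omega
  rw [hpq] at key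
  exact add_right_cancel key

/-- Positive/negative parts of the difference of two factorizations of the same element
again factor the same element. -/
theorem sum_parts (a : Fin n → Fin d → ℕ) {c c' : Fin n → ℕ}
    (h : ∑ l, c l • a l = ∑ l, c' l • a l) :
    ∑ l, ((c l : ℤ) - c' l).toNat • a l = ∑ l, ((c' l : ℤ) - c l).toNat • a l := by
  have key : (∑ l, ((c l : ℤ) - c' l).toNat • a l) + ∑ l, c' l • a l
      = (∑ l, ((c' l : ℤ) - c l).toNat • a l) + ∑ l, c l • a l := by
    rw [← Finset.sum_add_distrib, ← Finset.sum_add_distrib]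
    refine Finset.sum_congr rfl (fun l _ => ?_)
    rw [← add_smul, ← add_smul]
    congr 1
    omega
  rw [h] at key
  exact add_right_cancel key

end Aux3
section Aux4
variable {k : Type*} [Field k] {n d : ℕ}

/-- Under genericity, any two factorizations of `f + a i` (for `f ∈ PF S`) coincide. -/
theorem unique_fac {a : Fin n → Fin d → ℕ} {S : AddSubmonoid (Fin d → ℕ)}
    (hS : AddSubmonoid.closure (Set.range a) = S) (hgen : IsGeneric k a)
    {f : Fin d → ℕ} (hfS : f ∉ S) (i : Fin n) {c c' : Fin n → ℕ}
    (hc : ∑ l, c l • a l = f + a i) (hc' : ∑ l, c' l • a l = f + a i) : c = c' := by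
  by_contra hne
  set u : Fin n → ℕ := fun l => ((c l : ℤ) - c' l).toNat with hu
  set v : Fin n → ℕ := fun l => ((c' l : ℤ) - c l).toNat with hv
  have hsum : ∑ l, u l • a l = ∑ l, v l • a l := sum_parts a (hc.trans hc'.symm)
  have huv : u ≠ v := by
    intro h
    apply hne
    funext l
    have h2 : ((c l : ℤ) - c' l).toNat = ((c' l : ℤ) - c l).toNat := congrFun h l
    omega
  obtain ⟨p, q, hpq, hfull, hpu⟩ := genA hgen huv hsum
  have hci : c i = 0 := coord_zero hS hfS i c hc
  have hc'i : c' i = 0 := coord_zero hS hfS i c' hc'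
  have hpi : p i = 0 := by
    have h1 : p i ≤ ((c i : ℤ) - c' i).toNat := hpu i
    omega
  have hqi : q i ≠ 0 := (hfull i).resolve_left (by simp [hpi])
  have hpc : p ≤ c := by
    intro l
    show p l ≤ c l
    have h1 : p l ≤ ((c l : ℤ) - c' l).toNat := hpu l
    omega
  have hfac : ∑ l, (c l - p l + q l) • a l = f + a i := by
    rw [sum_replace a hpq hpc, hc]
  have h3 : c i - p i + q i = 0 := coord_zero hS hfS i _ hfac
  omega

theorem natToZ_sum (a : Fin n → Fin d → ℕ) (u : Fin n → ℕ) :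
    natToZ (∑ l, u l • a l) = ∑ l, (u l : ℤ) • natToZ (a l) := by
  funext m
  simp only [natToZ, Finset.sum_apply, Pi.smul_apply, smul_eq_mul]
  push_cast
  rfl

theorem natToZ_inj {x y : Fin d → ℕ} (h : natToZ x = natToZ y) : x = y := by
  funext m
  have := congrFun h m
  simpa [natToZ] using this

theorem natToZ_add (x y : Fin d → ℕ) : natToZ (x + y) = natToZ x + natToZ y := by
  funext m; simp [natToZ]

/-- Each row of an RF-matrix gives a factorization of `f + a i`. -/
theorem row_fac (a : Fin n → Fin d → ℕ) (f : Fin d → ℕ)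
    (M : Matrix (Fin n) (Fin n) ℤ) (hM : IsRFMatrix a f M) (i : Fin n) :
    ∑ l, (M i l).toNat • a l = f + a i := by
  classical
  apply natToZ_inj
  rw [natToZ_sum, natToZ_add]
  have key : ∀ l, ((M i l).toNat : ℤ) = M i l + if l = i then 1 else 0 := by
    intro l
    by_cases hl : l = i
    · rw [hl, hM.1 i]; simp
    · have := hM.2.1 i l (Ne.symm hl)
      simp [hl, Int.toNat_of_nonneg this]
  calc ∑ l, ((M i l).toNat : ℤ) • natToZ (a l)
      = ∑ l, (M i l + if l = i then 1 else 0) • natToZ (a l) := by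
        refine Finset.sum_congr rfl (fun l _ => ?_); rw [key l]
    _ = (∑ l, M i l • natToZ (a l)) + ∑ l, (if l = i then (1:ℤ) else 0) • natToZ (a l) := by
        rw [← Finset.sum_add_distrib]
        exact Finset.sum_congr rfl (fun l _ => add_smul _ _ _)
    _ = natToZ f + natToZ (a i) := by
        rw [hM.2.2 i]
        congr 1
        simp [ite_smul, Finset.sum_ite_eq']

/-- Conversely, a factorization of `f + a i` avoiding `i` gives an RF-row. -/
theorem fac_row (a : Fin n → Fin d → ℕ) (f : Fin d → ℕ) {c : Fin n → ℕ} (i : Fin n)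
    (hc : ∑ l, c l • a l = f + a i) (hci : c i = 0) :
    ∑ l, (if l = i then (-1 : ℤ) else (c l : ℤ)) • natToZ (a l) = natToZ f := by
  classical
  have key : ∀ l, (if l = i then (-1 : ℤ) else (c l : ℤ))
      = (c l : ℤ) - if l = i then 1 else 0 := by
    intro l
    by_cases hl : l = i
    · subst hl; simp [hci]
    · simp [hl]
  have h2 : natToZ (∑ l, c l • a l) = natToZ f + natToZ (a i) := by
    rw [hc, natToZ_add]
  calc ∑ l, (if l = i then (-1 : ℤ) else (c l : ℤ)) • natToZ (a l)
      = ∑ l, ((c l : ℤ) - if l = i then 1 else 0) • natToZ (a l) := by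
        refine Finset.sum_congr rfl (fun l _ => ?_); rw [key l]
    _ = (∑ l, (c l : ℤ) • natToZ (a l)) - ∑ l, (if l = i then (1:ℤ) else 0) • natToZ (a l) := by
        rw [← Finset.sum_sub_distrib]
        exact Finset.sum_congr rfl (fun l _ => sub_smul _ _ _)
    _ = natToZ f := by
        rw [← natToZ_sum, h2]
        simp [ite_smul, Finset.sum_ite_eq']

end Aux4
/-- If the toric ideal `I_S` is generic, then each pseudo-Frobenius
element has a unique RF-matrix, and no column of it contains two equal entries. -/
theorem generic_unique_RFMatrix (k : Type*) [Field k] {n d : ℕ}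
    (S : AddSubmonoid (Fin d → ℕ)) (a : Fin n → Fin d → ℕ) (hmin : MinGen a S)
    (hgen : IsGeneric k a) :
    ∀ f ∈ PF S, (∃! M : Matrix (Fin n) (Fin n) ℤ, IsRFMatrix a f M) ∧
      ∀ M : Matrix (Fin n) (Fin n) ℤ, IsRFMatrix a f M →
        ∀ i i' j : Fin n, i ≠ i' → M i j ≠ M i' j := by
  classical
  obtain ⟨hinj, hclos, hminimal⟩ := hmin
  intro f hf
  have hfS : f ∉ S := hf.1.2
  have ha0 : ∀ i, a i ≠ 0 := by
    intro i h0
    have h1 := hminimal (a i) ⟨i, rfl⟩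
    apply h1
    rw [h0]
    exact zero_mem _
  have haS : ∀ i, a i ∈ S := by
    intro i; rw [← hclos]; exact AddSubmonoid.subset_closure ⟨i, rfl⟩
  have hfa : ∀ i : Fin n, ∃ u : Fin n → ℕ, f + a i = ∑ l, u l • a l :=
    fun i => (mem_S_iff hclos _).mp (hf.2 (a i) (haS i) (ha0 i))
  choose C hC using hfa
  have hCfac : ∀ i, ∑ l, C i l • a l = f + a i := fun i => (hC i).symm
  have hC0 : ∀ i, C i i = 0 := fun i => coord_zero hclos hfS i (C i) (hCfac i)
  constructor
  · refine ⟨fun i j => if j = i then (-1 : ℤ) else (C i j : ℤ), ⟨?_, ?_, ?_⟩, ?_⟩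
    · intro i; simp
    · intro i j hij
      simp [Ne.symm hij]
    · intro i
      exact fac_row a f i (hCfac i) (hC0 i)
    · intro M' hM'
      funext i j
      have h1 : (fun l => (M' i l).toNat) = C i :=
        unique_fac hclos hgen hfS i (row_fac a f M' hM' i) (hCfac i)
      by_cases hj : j = i
      · rw [hj, hM'.1 i]; simp
      · have h2 : (M' i j).toNat = C i j := congrFun h1 j
        have h3 : 0 ≤ M' i j := hM'.2.1 i j (Ne.symm hj)
        simp only [hj, if_false]
        omega
  · intro M hM i i' j hii' hMeq
    have hcfac : ∑ l, (M i l).toNat • a l = f + a i := row_fac a f M hM i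
    have hc'fac : ∑ l, (M i' l).toNat • a l = f + a i' := row_fac a f M hM i'
    have hci : (M i i).toNat = 0 := by rw [hM.1 i]; rfl
    have hc'i' : (M i' i').toNat = 0 := by rw [hM.1 i']; rfl
    have hji : j ≠ i := by
      intro h
      have h1 : M i j = -1 := by rw [h]; exact hM.1 i
      have h2 : 0 ≤ M i' j := by rw [h]; exact hM.2.1 i' i (Ne.symm hii')
      rw [hMeq] at h1
      omega
    have hji' : j ≠ i' := by
      intro h
      have h1 : M i' j = -1 := by rw [h]; exact hM.1 i'
      have h2 : 0 ≤ M i j := by rw [h]; exact hM.2.1 i i' hii'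
      rw [← hMeq] at h1
      omega
    have hcc'j : (M i j).toNat = (M i' j).toNat := by rw [hMeq]
    -- the two augmented factorizations of f + a i + a i'
    have hDfac : ∑ l, ((M i l).toNat + if l = i' then 1 else 0) • a l
        = (f + a i) + a i' := by rw [sum_add_single a _ i', hcfac]
    have hD'fac : ∑ l, ((M i' l).toNat + if l = i then 1 else 0) • a l
        = (f + a i') + a i := by rw [sum_add_single a _ i, hc'fac]
    have hDD' : ∑ l, ((M i l).toNat + if l = i' then 1 else 0) • a l
        = ∑ l, ((M i' l).toNat + if l = i then 1 else 0) • a l := by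
      rw [hDfac, hD'fac, add_right_comm]
    have hsum := sum_parts a hDD'
    have huv : (fun l => ((((M i l).toNat + if l = i' then 1 else 0 : ℕ) : ℤ)
          - (((M i' l).toNat + if l = i then 1 else 0 : ℕ) : ℤ)).toNat)
        ≠ (fun l => ((((M i' l).toNat + if l = i then 1 else 0 : ℕ) : ℤ)
          - (((M i l).toNat + if l = i' then 1 else 0 : ℕ) : ℤ)).toNat) := by
      intro h
      have h2 := congrFun h i
      simp [hii'] at h2
      omega
    obtain ⟨p, q, hpq, hfull, hpu⟩ := genA hgen huv hsum
    have hpi : p i = 0 := by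
      have h1 : p i ≤ ((((M i i).toNat + if i = i' then 1 else 0 : ℕ) : ℤ)
          - (((M i' i).toNat + if i = i then 1 else 0 : ℕ) : ℤ)).toNat := hpu i
      simp [hii'] at h1
      omega
    have hpj : p j = 0 := by
      have h1 : p j ≤ ((((M i j).toNat + if j = i' then 1 else 0 : ℕ) : ℤ)
          - (((M i' j).toNat + if j = i then 1 else 0 : ℕ) : ℤ)).toNat := hpu j
      simp [hji, hji'] at h1
      omega
    have hqi : q i ≠ 0 := (hfull i).resolve_left (by simp [hpi])
    have hqj : q j ≠ 0 := (hfull j).resolve_left (by simp [hpj])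
    have hpD : p ≤ fun l => (M i l).toNat + if l = i' then 1 else 0 := by
      intro l
      show p l ≤ (M i l).toNat + if l = i' then 1 else 0
      have h1 : p l ≤ ((((M i l).toNat + if l = i' then 1 else 0 : ℕ) : ℤ)
          - (((M i' l).toNat + if l = i then 1 else 0 : ℕ) : ℤ)).toNat := hpu l
      by_cases hl : l = i' <;> simp [hl] at h1 ⊢ <;> omega
    have hc''fac : ∑ l, ((((M i l).toNat + if l = i' then 1 else 0) - p l) + q l) • a l
        = (f + a i) + a i' := by
      rw [sum_replace a hpq hpD, hDfac]
    -- remove one copy of `a i` to get a factorization of `f + a i'`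
    have hc''rw : ∀ l, (((M i l).toNat + if l = i' then 1 else 0) - p l) + q l
        = (if l = i then ((((M i i).toNat + if i = i' then 1 else 0) - p i) + q i) - 1
            else (((M i l).toNat + if l = i' then 1 else 0) - p l) + q l)
          + if l = i then 1 else 0 := by
      intro l
      by_cases hl : l = i
      · have h4 : (1:ℕ) ≤ q i := Nat.one_le_iff_ne_zero.mpr hqi
        subst hl
        simp only [if_pos rfl]
        simp [hii']
        omega
      · simp [hl]
    have hkey : ∑ l, ((((M i l).toNat + if l = i' then 1 else 0) - p l) + q l) • a l
        = (∑ l, (if l = i then ((((M i i).toNat + if i = i' then 1 else 0) - p i) + q i) - 1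
            else (((M i l).toNat + if l = i' then 1 else 0) - p l) + q l) • a l) + a i := by
      calc ∑ l, ((((M i l).toNat + if l = i' then 1 else 0) - p l) + q l) • a l
          = ∑ l, ((if l = i then ((((M i i).toNat + if i = i' then 1 else 0) - p i) + q i) - 1
              else (((M i l).toNat + if l = i' then 1 else 0) - p l) + q l)
            + if l = i then 1 else 0) • a l :=
            Finset.sum_congr rfl (fun l _ => congrArg (fun t => t • a l) (hc''rw l))
        _ = _ := sum_add_single a _ i
    have hEfac : ∑ l, (if l = i then ((((M i i).toNat + if i = i' then 1 else 0) - p i) + q i) - 1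
        else (((M i l).toNat + if l = i' then 1 else 0) - p l) + q l) • a l = f + a i' := by
      have h1 := hc''fac
      rw [hkey, add_right_comm f (a i) (a i')] at h1
      exact add_right_cancel h1
    have hEc' : (fun l => if l = i then ((((M i i).toNat + if i = i' then 1 else 0) - p i) + q i) - 1
        else (((M i l).toNat + if l = i' then 1 else 0) - p l) + q l)
        = fun l => (M i' l).toNat :=
      unique_fac hclos hgen hfS i' hEfac hc'fac
    have hEj := congrFun hEc' j
    simp [hji, hji'] at hEj
    omega
end
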